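/- Let N ≥ 1, let u_j, v_j : ℝ×ℝ → ℝ (j = 1,…,N) be smooth, set m_j = u_j − ∂_x²u_j and n_j = v_j − ∂_x²v_j, let H : ℝ×ℝ → ℝ be smooth, and suppose the CH(N,H) system holds identically. If S := Σ_{i=1}^N m_i n_i > 0 everywhere, then the local conservation law ∂_t(√S) = ∂_x(H·√S) holds identically on ℝ×ℝ; that is, ρ_0 = (Σ_{i=1}^N m_i n_i)^{1/2} is a conserved density with flux F_0 = H(Σ_{i=1}^N m_i n_i)^{1/2}. -/

import Mathlib

noncomputable section

/-- Partial derivative in the first (spatial) variable. -/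
def pdx (f : ℝ → ℝ → ℝ) : ℝ → ℝ → ℝ := fun x t => deriv (fun y => f y t) x

/-- Partial derivative in the second (time) variable. -/
def pdt (f : ℝ → ℝ → ℝ) : ℝ → ℝ → ℝ := fun x t => deriv (fun s => f x s) t

/-- The CH(N,H) multi-component system. -/
def chSys (N : ℕ) (u v m n : Fin N → ℝ → ℝ → ℝ) (H : ℝ → ℝ → ℝ) : Prop :=
  ∀ j : Fin N, ∀ x t : ℝ,
    (pdt (m j) x t =
      pdx (fun x t => m j x t * H x t) x t + m j x t * H x t +
        (1 / ((N : ℝ) + 1) ^ 2) *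
          ∑ i : Fin N,
            (m i x t * (u j x t - pdx (u j) x t) * (v i x t + pdx (v i) x t) +
             m j x t * (u i x t - pdx (u i) x t) * (v i x t + pdx (v i) x t)))
    ∧
    (pdt (n j) x t =
      pdx (fun x t => n j x t * H x t) x t - n j x t * H x t -
        (1 / ((N : ℝ) + 1) ^ 2) *
          ∑ i : Fin N,
            (n i x t * (u i x t - pdx (u i) x t) * (v j x t + pdx (v j) x t) +
             n j x t * (u i x t - pdx (u i) x t) * (v i x t + pdx (v i) x t)))

/-- The partial derivative in `x` as an actual derivative. -/
lemma hasDerivAt_pdx {f : ℝ → ℝ → ℝ} (hf : ContDiff ℝ (⊤ : ℕ∞) (Function.uncurry f)) (x t : ℝ) :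
    HasDerivAt (fun y => f y t) (pdx f x t) x := by
  have h1 : HasDerivAt (fun y : ℝ => (y, t)) ((1 : ℝ), (0 : ℝ)) x :=
    (hasDerivAt_id x).prodMk (hasDerivAt_const x t)
  have h2 := ((hf.differentiable (by simp)) (x, t)).hasFDerivAt.comp_hasDerivAt x h1
  exact h2.differentiableAt.hasDerivAt

/-- The partial derivative in `t` as an actual derivative. -/
lemma hasDerivAt_pdt {f : ℝ → ℝ → ℝ} (hf : ContDiff ℝ (⊤ : ℕ∞) (Function.uncurry f)) (x t : ℝ) :
    HasDerivAt (fun s => f x s) (pdt f x t) t := by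
  have h1 : HasDerivAt (fun s : ℝ => (x, s)) ((0 : ℝ), (1 : ℝ)) t :=
    (hasDerivAt_const t x).prodMk (hasDerivAt_id t)
  have h2 := ((hf.differentiable (by simp)) (x, t)).hasFDerivAt.comp_hasDerivAt t h1
  exact h2.differentiableAt.hasDerivAt

/-- `pdx` preserves smoothness. -/
lemma contDiff_pdx {f : ℝ → ℝ → ℝ} (hf : ContDiff ℝ (⊤ : ℕ∞) (Function.uncurry f)) :
    ContDiff ℝ (⊤ : ℕ∞) (Function.uncurry (pdx f)) := by
  have key : Function.uncurry (pdx f)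
      = fun p : ℝ × ℝ => fderiv ℝ (Function.uncurry f) p ((1 : ℝ), (0 : ℝ)) := by
    funext p
    have h1 : HasDerivAt (fun y : ℝ => (y, p.2)) ((1 : ℝ), (0 : ℝ)) p.1 :=
      (hasDerivAt_id p.1).prodMk (hasDerivAt_const p.1 p.2)
    have h2 := ((hf.differentiable (by simp)) (p.1, p.2)).hasFDerivAt.comp_hasDerivAt p.1 h1
    exact h2.deriv
  rw [key]
  exact (hf.fderiv_right (by simp)).clm_apply contDiff_const

/-- The algebraic heart of the conservation law: the quadratic double sums cancel. -/
lemma key_alg (N : ℕ) (M Nv A B Pm Pn Pt Qt : Fin N → ℝ) (Hv Hx c : ℝ)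
    (h1 : ∀ j, Pt j = Pm j * Hv + M j * Hx + M j * Hv +
      c * ∑ i : Fin N, (M i * A j * B i + M j * A i * B i))
    (h2 : ∀ j, Qt j = Pn j * Hv + Nv j * Hx - Nv j * Hv -
      c * ∑ i : Fin N, (Nv i * A i * B j + Nv j * A i * B i)) :
    ∑ j : Fin N, (Pt j * Nv j + M j * Qt j) =
      Hv * ∑ j : Fin N, (Pm j * Nv j + M j * Pn j) + 2 * Hx * ∑ j : Fin N, M j * Nv j := by
  have e1 : ∀ j, ∑ i : Fin N, (M i * A j * B i + M j * A i * B i)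
      = A j * (∑ i : Fin N, M i * B i) + M j * (∑ i : Fin N, A i * B i) := by
    intro j
    rw [Finset.sum_add_distrib, Finset.mul_sum, Finset.mul_sum]
    congr 1
    · exact Finset.sum_congr rfl fun i _ => by ring
    · exact Finset.sum_congr rfl fun i _ => by ring
  have e2 : ∀ j, ∑ i : Fin N, (Nv i * A i * B j + Nv j * A i * B i)
      = B j * (∑ i : Fin N, Nv i * A i) + Nv j * (∑ i : Fin N, A i * B i) := by
    intro j
    rw [Finset.sum_add_distrib, Finset.mul_sum, Finset.mul_sum]
    congr 1
    · exact Finset.sum_congr rfl fun i _ => by ring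
    · exact Finset.sum_congr rfl fun i _ => by ring
  have p1 : ∑ j : Fin N, (Hv * (Pm j * Nv j + M j * Pn j))
      = Hv * ∑ j : Fin N, (Pm j * Nv j + M j * Pn j) := (Finset.mul_sum _ _ _).symm
  have p2 : ∑ j : Fin N, (2 * Hx * (M j * Nv j))
      = 2 * Hx * ∑ j : Fin N, M j * Nv j := (Finset.mul_sum _ _ _).symm
  have p3 : ∑ j : Fin N, (c * (∑ i : Fin N, M i * B i) * (Nv j * A j))
      = c * (∑ i : Fin N, M i * B i) * ∑ j : Fin N, Nv j * A j := (Finset.mul_sum _ _ _).symm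
  have p4 : ∑ j : Fin N, (c * (∑ i : Fin N, Nv i * A i) * (M j * B j))
      = c * (∑ i : Fin N, Nv i * A i) * ∑ j : Fin N, M j * B j := (Finset.mul_sum _ _ _).symm
  calc ∑ j : Fin N, (Pt j * Nv j + M j * Qt j)
      = ∑ j : Fin N, ((Hv * (Pm j * Nv j + M j * Pn j) + 2 * Hx * (M j * Nv j))
          + (c * (∑ i : Fin N, M i * B i) * (Nv j * A j)
            - c * (∑ i : Fin N, Nv i * A i) * (M j * B j))) :=
        Finset.sum_congr rfl fun j _ => by rw [h1 j, h2 j, e1 j, e2 j]; ring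
    _ = _ := by
        rw [Finset.sum_add_distrib, Finset.sum_add_distrib, Finset.sum_sub_distrib,
          p1, p2, p3, p4]
        ring

/-- if the CH(N,H) system holds and `S = Σ mᵢnᵢ > 0` everywhere, then
`ρ₀ = √S` is a conserved density with flux `F₀ = H√S`:  ∂ₜ√S = ∂ₓ(H√S). -/
theorem conserved_density_rho0 (N : ℕ) (hN : 1 ≤ N)
    (u v m n : Fin N → ℝ → ℝ → ℝ) (H : ℝ → ℝ → ℝ)
    (hu : ∀ j, ContDiff ℝ (⊤ : ℕ∞) (Function.uncurry (u j)))
    (hv : ∀ j, ContDiff ℝ (⊤ : ℕ∞) (Function.uncurry (v j)))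
    (hH : ContDiff ℝ (⊤ : ℕ∞) (Function.uncurry H))
    (hm : ∀ j, m j = fun x t => u j x t - pdx (pdx (u j)) x t)
    (hn : ∀ j, n j = fun x t => v j x t - pdx (pdx (v j)) x t)
    (hch : chSys N u v m n H)
    (hS : ∀ x t : ℝ, 0 < ∑ i : Fin N, m i x t * n i x t) :
    ∀ x t : ℝ,
      pdt (fun x t => Real.sqrt (∑ i : Fin N, m i x t * n i x t)) x t =
        pdx (fun x t => H x t * Real.sqrt (∑ i : Fin N, m i x t * n i x t)) x t := by
  have hmc : ∀ j, ContDiff ℝ (⊤ : ℕ∞) (Function.uncurry (m j)) := by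
    intro j; rw [hm j]
    exact (hu j).sub (contDiff_pdx (contDiff_pdx (hu j)))
  have hnc : ∀ j, ContDiff ℝ (⊤ : ℕ∞) (Function.uncurry (n j)) := by
    intro j; rw [hn j]
    exact (hv j).sub (contDiff_pdx (contDiff_pdx (hv j)))
  intro x t
  have hne : (∑ i : Fin N, m i x t * n i x t) ≠ 0 := (hS x t).ne'
  -- product rule for the fluxes m_j H, n_j H
  have hmxH : ∀ j, pdx (fun x t => m j x t * H x t) x t
      = pdx (m j) x t * H x t + m j x t * pdx H x t :=
    fun j => ((hasDerivAt_pdx (hmc j) x t).mul (hasDerivAt_pdx hH x t)).deriv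
  have hnxH : ∀ j, pdx (fun x t => n j x t * H x t) x t
      = pdx (n j) x t * H x t + n j x t * pdx H x t :=
    fun j => ((hasDerivAt_pdx (hnc j) x t).mul (hasDerivAt_pdx hH x t)).deriv
  -- derivatives of S = Σ mᵢnᵢ
  have hStD : HasDerivAt (fun s => ∑ i : Fin N, m i x s * n i x s)
      (∑ i : Fin N, (pdt (m i) x t * n i x t + m i x t * pdt (n i) x t)) t :=
    HasDerivAt.fun_sum fun i _ => (hasDerivAt_pdt (hmc i) x t).mul (hasDerivAt_pdt (hnc i) x t)
  have hSxD : HasDerivAt (fun y => ∑ i : Fin N, m i y t * n i y t)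
      (∑ i : Fin N, (pdx (m i) x t * n i x t + m i x t * pdx (n i) x t)) x :=
    HasDerivAt.fun_sum fun i _ => (hasDerivAt_pdx (hmc i) x t).mul (hasDerivAt_pdx (hnc i) x t)
  -- the key identity  S_t = H S_x + 2 H_x S
  have key : ∑ i : Fin N, (pdt (m i) x t * n i x t + m i x t * pdt (n i) x t)
      = H x t * ∑ i : Fin N, (pdx (m i) x t * n i x t + m i x t * pdx (n i) x t)
        + 2 * pdx H x t * ∑ i : Fin N, m i x t * n i x t := by
    refine key_alg N (fun j => m j x t) (fun j => n j x t)
      (fun j => u j x t - pdx (u j) x t) (fun j => v j x t + pdx (v j) x t)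
      (fun j => pdx (m j) x t) (fun j => pdx (n j) x t)
      (fun j => pdt (m j) x t) (fun j => pdt (n j) x t)
      (H x t) (pdx H x t) (1 / ((N : ℝ) + 1) ^ 2) ?_ ?_
    · intro j
      rw [(hch j x t).1, hmxH j]
    · intro j
      rw [(hch j x t).2, hnxH j]
  -- derivatives of the density and the flux
  have lhs : pdt (fun x t => Real.sqrt (∑ i : Fin N, m i x t * n i x t)) x t
      = (∑ i : Fin N, (pdt (m i) x t * n i x t + m i x t * pdt (n i) x t))
        / (2 * Real.sqrt (∑ i : Fin N, m i x t * n i x t)) :=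
    (hStD.sqrt hne).deriv
  have rhs : pdx (fun x t => H x t * Real.sqrt (∑ i : Fin N, m i x t * n i x t)) x t
      = pdx H x t * Real.sqrt (∑ i : Fin N, m i x t * n i x t)
        + H x t * ((∑ i : Fin N, (pdx (m i) x t * n i x t + m i x t * pdx (n i) x t))
          / (2 * Real.sqrt (∑ i : Fin N, m i x t * n i x t))) :=
    ((hasDerivAt_pdx hH x t).mul (hSxD.sqrt hne)).deriv
  rw [lhs, rhs, key]
  have hrpos : 0 < Real.sqrt (∑ i : Fin N, m i x t * n i x t) := Real.sqrt_pos.mpr (hS x t)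
  have hrr : Real.sqrt (∑ i : Fin N, m i x t * n i x t)
      * Real.sqrt (∑ i : Fin N, m i x t * n i x t)
      = ∑ i : Fin N, m i x t * n i x t := Real.mul_self_sqrt (hS x t).le
  set s : ℝ := ∑ i : Fin N, m i x t * n i x t with hs
  set r : ℝ := Real.sqrt s with hr
  rw [← hrr]
  field_simp
  ring
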